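/- arXiv:2407.19771 — 3 statements merged into one kernel-verified Lean document; each statement's English description precedes it below -/
import Mathlib

section
/- Let p be a prime dividing the positive integer n, and let d be a divisor of n. Then the number of cyclic subgroups of Z_p × Z_n of order d equals: p, if p² divides d; p + 1, if p divides d but p² does not divide d; and 1, if p does not divide d. -/
open Polynomial

/-- The power graph of an additive group `G`: distinct vertices `x` and `y` are adjacent
iff one is an (integral) multiple of the other, i.e. `x ∈ ⟨y⟩` or `y ∈ ⟨x⟩`. -/
def addPowerGraph (G : Type*) [AddGroup G] : SimpleGraph G where
  Adj x y := x ≠ y ∧ (x ∈ AddSubgroup.zmultiples y ∨ y ∈ AddSubgroup.zmultiples x)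
  symm := by
    constructor
    intro x y h
    exact ⟨h.1.symm, h.2.symm⟩
  loopless := by
    constructor
    intro x h
    exact h.1 rfl

open Classical in
/-- The adjacency matrix (over `ℤ`) of a finite simple graph. -/
noncomputable def adjMat {V : Type*} [Fintype V] (G : SimpleGraph V) : Matrix V V ℤ :=
  fun i j => if G.Adj i j then 1 else 0

/-- The number of cyclic subgroups of order `d` of an additive group `G`. -/
noncomputable def numCyclicSubgroups (G : Type*) [AddGroup G] (d : ℕ) : ℕ :=
  Nat.card {H : AddSubgroup G // IsAddCyclic H ∧ Nat.card H = d}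

/-!
A cyclic subgroup of order `d` has exactly `φ(d)` generators, so `φ(d)` times the number of
cyclic subgroups of order `d` is the number of elements of order `d`. In `Z_p × Z_n` the order
of `(a, b)` is `lcm(ord a, ord b)`: for `a = 0` this leaves the `φ(d)` elements of order `d` in
`Z_n`, and for each of the `p - 1` elements `a ≠ 0` the elements `b` with `lcm(p, ord b) = d`,
which have order `d` (if `p² ∣ d`), order `d` or `d / p` (if `p ∥ d`), or do not exist (if
`p ∤ d`). Since `φ(d) = (p - 1) φ(d / p)` when `p ∥ d`, dividing by `φ(d)` gives `p`, `p + 1`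
and `1`.
-/

open AddSubgroup

theorem Nat.Prime.lcm_eq_mul_of_not_dvd {p e : ℕ} (hp : p.Prime) (h : ¬p ∣ e) :
    p.lcm e = p * e :=
  Nat.Coprime.lcm_eq_mul ((hp.coprime_iff_not_dvd).2 h)

theorem Nat.lcm_prime_left_eq_iff_of_sq_dvd {p d e : ℕ} (hp : p.Prime) (h2 : p ^ 2 ∣ d) :
    p.lcm e = d ↔ e = d := by
  constructor
  · intro h
    by_cases hpe : p ∣ e
    · rwa [Nat.lcm_eq_right hpe] at h
    · rw [hp.lcm_eq_mul_of_not_dvd hpe] at h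
      subst h
      exact absurd ((Nat.mul_dvd_mul_iff_left hp.pos).1 (pow_two p ▸ h2)) hpe
  · rintro rfl
    exact Nat.lcm_eq_right (dvd_of_mul_right_dvd (pow_two p ▸ h2))

theorem Nat.lcm_prime_left_eq_prime_mul_iff {p k e : ℕ} (hp : p.Prime) (hk : ¬p ∣ k) :
    p.lcm e = p * k ↔ e = p * k ∨ e = k := by
  constructor
  · intro h
    by_cases hpe : p ∣ e
    · exact .inl (by rwa [Nat.lcm_eq_right hpe] at h)
    · rw [hp.lcm_eq_mul_of_not_dvd hpe] at h
      exact .inr (Nat.eq_of_mul_eq_mul_left hp.pos h)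
  · rintro (rfl | rfl)
    · exact Nat.lcm_eq_right (dvd_mul_right p k)
    · exact hp.lcm_eq_mul_of_not_dvd hk

theorem AddSubgroup.zmultiples_eq_of_addOrderOf_eq_card {G : Type*} [AddGroup G]
    {H : AddSubgroup G} [Finite H] {y : G} (hy : y ∈ H) (h : addOrderOf y = Nat.card H) :
    zmultiples y = H :=
  eq_of_le_of_card_ge (zmultiples_le.2 hy) (by rw [Nat.card_zmultiples, h])

theorem IsAddCyclic.natCard_addOrderOf_eq_totient {C : Type*} [AddGroup C] [IsAddCyclic C]
    [Finite C] {e : ℕ} (he : e ∣ Nat.card C) :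
    Nat.card {b : C // addOrderOf b = e} = e.totient := by
  classical
  have := Fintype.ofFinite C
  rw [Nat.card_eq_fintype_card, Fintype.card_subtype]
  exact IsAddCyclic.card_addOrderOf_eq_totient (by rwa [← Nat.card_eq_fintype_card])

theorem numCyclicSubgroups_mul_totient {G : Type*} [AddGroup G] [Finite G] (d : ℕ) :
    numCyclicSubgroups G d * d.totient = Nat.card {x : G // addOrderOf x = d} := by
  classical
  have := Fintype.ofFinite G
  let span (x : {x : G // addOrderOf x = d}) :
      {H : AddSubgroup G // IsAddCyclic H ∧ Nat.card H = d} :=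
    ⟨zmultiples x.1, inferInstance, by rw [Nat.card_zmultiples, x.2]⟩
  have generators (H : {H : AddSubgroup G // IsAddCyclic H ∧ Nat.card H = d}) :
      {x // span x = H} ≃ {y : H.1 // addOrderOf y = d} :=
    { toFun x :=
        ⟨⟨x.1.1, congrArg Subtype.val x.2 ▸ mem_zmultiples _⟩, by simpa using x.1.2⟩
      invFun y := ⟨⟨y.1, (addOrderOf_coe y.1).trans y.2⟩, Subtype.ext <|
        zmultiples_eq_of_addOrderOf_eq_card y.1.2
          ((addOrderOf_coe y.1).trans (y.2.trans H.2.2.symm))⟩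
      left_inv _ := rfl
      right_inv _ := rfl }
  have fiber (H : {H : AddSubgroup G // IsAddCyclic H ∧ Nat.card H = d}) :
      Nat.card {x // span x = H} = d.totient := by
    have := H.2.1
    rw [Nat.card_congr (generators H), IsAddCyclic.natCard_addOrderOf_eq_totient H.2.2.symm.dvd]
  rw [← Nat.card_congr (Equiv.sigmaFiberEquiv span), Nat.card_sigma,
    Finset.sum_congr rfl fun H _ => fiber H, Finset.sum_const, Finset.card_univ, smul_eq_mul,
    numCyclicSubgroups, Nat.card_eq_fintype_card]

theorem natCard_addOrderOf_prod_eq_sum {A B : Type*} [AddGroup A] [AddGroup B] [Fintype A]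
    [Finite B] (d : ℕ) :
    Nat.card {x : A × B // addOrderOf x = d} =
      ∑ a : A, Nat.card {b : B // (addOrderOf a).lcm (addOrderOf b) = d} := by
  simp_rw [Prod.addOrderOf]
  rw [Nat.card_congr (Equiv.subtypeProdEquivSigmaSubtype fun a b =>
    (addOrderOf a).lcm (addOrderOf b) = d), Nat.card_sigma]

theorem addOrderOf_eq_of_card_prime {A : Type*} [AddGroup A] [Fintype A] {p : ℕ}
    (hp : p.Prime) (hA : Fintype.card A = p) {a : A} (ha : a ≠ 0) : addOrderOf a = p :=
  (hp.eq_one_or_self_of_dvd _ (hA ▸ addOrderOf_dvd_card)).resolve_left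
    (mt AddMonoid.addOrderOf_eq_one_iff.1 ha)

theorem sum_addOrderOf_of_card_prime {A M : Type*} [AddGroup A] [Fintype A] [DecidableEq A]
    [AddCommMonoid M] {p : ℕ} (hp : p.Prime) (hA : Fintype.card A = p) (f : ℕ → M) :
    ∑ a : A, f (addOrderOf a) = f 1 + (p - 1) • f p := by
  rw [← Finset.add_sum_erase _ _ (Finset.mem_univ 0), addOrderOf_zero,
    Finset.sum_congr rfl fun a ha => by
      rw [addOrderOf_eq_of_card_prime hp hA (Finset.ne_of_mem_erase ha)],
    Finset.sum_const, Finset.card_erase_of_mem (Finset.mem_univ _), Finset.card_univ, hA]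

section CyclicCount

variable {C : Type*} [AddGroup C] [IsAddCyclic C] [Finite C] {p : ℕ}

theorem natCard_lcm_addOrderOf_eq_of_sq_dvd (hp : p.Prime) {d : ℕ} (h2 : p ^ 2 ∣ d)
    (hd : d ∣ Nat.card C) :
    Nat.card {b : C // p.lcm (addOrderOf b) = d} = d.totient := by
  simp_rw [Nat.lcm_prime_left_eq_iff_of_sq_dvd hp h2]
  exact IsAddCyclic.natCard_addOrderOf_eq_totient hd

theorem natCard_lcm_addOrderOf_eq_prime_mul (hp : p.Prime) {k : ℕ} (hk : ¬p ∣ k)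
    (hd : p * k ∣ Nat.card C) :
    Nat.card {b : C // p.lcm (addOrderOf b) = p * k} = (p * k).totient + k.totient := by
  have hk0 : 0 < k := Nat.pos_of_ne_zero fun h => hk (h ▸ dvd_zero p)
  have hne : p * k ≠ k := (lt_mul_left hk0 hp.one_lt).ne'
  classical
  simp_rw [Nat.lcm_prime_left_eq_prime_mul_iff hp hk]
  rw [Nat.card_congr (subtypeOrEquiv _ _ fun _ h h' b hb => hne ((h b hb).symm.trans (h' b hb))),
    Nat.card_sum, IsAddCyclic.natCard_addOrderOf_eq_totient hd,
    IsAddCyclic.natCard_addOrderOf_eq_totient (dvd_of_mul_left_dvd hd)]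

end CyclicCount

theorem natCard_lcm_eq_of_not_dvd {C : Type*} (f : C → ℕ) {p d : ℕ} (h : ¬p ∣ d) :
    Nat.card {b : C // p.lcm (f b) = d} = 0 :=
  have : IsEmpty {b : C // p.lcm (f b) = d} := ⟨fun b => h (b.2 ▸ Nat.dvd_lcm_left _ _)⟩
  Nat.card_of_isEmpty

theorem numCyclicSubgroups_prod_mul_totient {A C : Type*} [AddGroup A] [Fintype A]
    [AddGroup C] [IsAddCyclic C] [Finite C] {p d : ℕ} (hp : p.Prime) (hA : Fintype.card A = p)
    (hd : d ∣ Nat.card C) :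
    numCyclicSubgroups (A × C) d * d.totient =
      d.totient + (p - 1) * Nat.card {b : C // p.lcm (addOrderOf b) = d} := by
  classical
  simp_rw [numCyclicSubgroups_mul_totient, natCard_addOrderOf_prod_eq_sum,
    sum_addOrderOf_of_card_prime hp hA (fun e => Nat.card {b : C // e.lcm (addOrderOf b) = d}),
    Nat.lcm_one_left, smul_eq_mul, IsAddCyclic.natCard_addOrderOf_eq_totient hd]

theorem num_cyclic_subgroups_Zp_Zn_general (p n : ℕ) (hp : p.Prime) [NeZero n]
    (d : ℕ) (hd : d ∣ n) :
    (p ^ 2 ∣ d → numCyclicSubgroups (ZMod p × ZMod n) d = p) ∧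
    (p ∣ d → ¬ p ^ 2 ∣ d → numCyclicSubgroups (ZMod p × ZMod n) d = p + 1) ∧
    (¬ p ∣ d → numCyclicSubgroups (ZMod p × ZMod n) d = 1) := by
  have : NeZero p := ⟨hp.ne_zero⟩
  have hdn : d ∣ Nat.card (ZMod n) := by rwa [Nat.card_zmod]
  have key := numCyclicSubgroups_prod_mul_totient hp (ZMod.card p) hdn
  have htot : 0 < d.totient := Nat.totient_pos.2 (Nat.pos_of_dvd_of_pos hd (NeZero.pos n))
  refine ⟨fun h2 => ?_, fun h1 h2 => ?_, fun h0 => ?_⟩ <;>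
    refine Nat.eq_of_mul_eq_mul_right htot ?_
  · rw [natCard_lcm_addOrderOf_eq_of_sq_dvd hp h2 hdn] at key
    zify [hp.one_le] at key ⊢
    linear_combination key
  · obtain ⟨k, rfl⟩ := h1
    have hk : ¬p ∣ k := fun h => h2 (pow_two p ▸ mul_dvd_mul_left p h)
    rw [natCard_lcm_addOrderOf_eq_prime_mul hp hk hdn] at key
    rw [Nat.totient_mul_of_prime_of_not_dvd hp hk] at key ⊢
    zify [hp.one_le] at key ⊢
    linear_combination key
  · rw [natCard_lcm_eq_of_not_dvd _ h0, mul_zero, add_zero] at key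
    rw [key, one_mul]

/-- For a prime `p` dividing `n` and a divisor `d` of `n`, the number of cyclic
subgroups of `Z_p × Z_n` of order `d` is `p` if `p² ∣ d`, `p + 1` if `p ∣ d` but
`p² ∤ d`, and `1` if `p ∤ d`. -/
theorem num_cyclic_subgroups_Zp_Zn (p n : ℕ) (hp : p.Prime) [NeZero n] (hpn : p ∣ n)
    (d : ℕ) (hd : d ∣ n) :
    (p ^ 2 ∣ d → numCyclicSubgroups (ZMod p × ZMod n) d = p) ∧
    (p ∣ d → ¬ p ^ 2 ∣ d → numCyclicSubgroups (ZMod p × ZMod n) d = p + 1) ∧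
    (¬ p ∣ d → numCyclicSubgroups (ZMod p × ZMod n) d = 1) :=
  num_cyclic_subgroups_Zp_Zn_general p n hp d hd
end

section
/- Let p be a prime dividing the positive integer n, and let G = Z_p × Z_n. Then (X + 1)^α divides the characteristic polynomial of the adjacency matrix of the power graph P(G), where α = p·Σ_{d ∣ n, p² ∣ d} (φ(d) − 1) + (p+1)·Σ_{d ∣ n, p ∣ d, p² ∤ d} (φ(d) − 1) + Σ_{d ∣ n, p ∤ d} (φ(d) − 1). -/
open Polynomial

/-! Vertices `x, y` of the power graph that generate the same cyclic subgroup are closed twins,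
so rows `x` and `y` of `A + 1` agree, and subtracting row `y` from row `x` of
`X - A = (X + 1) - (A + 1)` leaves a row divisible by `X + 1`. Doing this for every generator of
each cyclic subgroup except one chosen representative gives `(X + 1) ^ m ∣ charpoly A` with
`m = ∑_d c_d (φ d - 1)`, where `c_d` is the number of cyclic subgroups of order `d`. A finite group
has `c_d φ d` elements of order `d`; exhibiting `p φ d`, `(p + 1) φ d` or `φ d` of them in
`ℤ_p × ℤ_n` for `d ∣ n`, according as `p² ∣ d`, `p ∥ d` or `p ∤ d`, bounds `c_d` from below. -/

open Polynomial Finset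
open scoped Nat

namespace Matrix

variable {n R : Type*} [Fintype n] [DecidableEq n] [CommRing R]

theorem pow_card_dvd_det_of_dvd_row (M : Matrix n n R) (S : Finset n) (c : R)
    (h : ∀ x ∈ S, ∀ z, c ∣ M x z) : c ^ #S ∣ M.det := by
  choose N hN using h
  let N' : Matrix n n R := of fun x z => if hx : x ∈ S then N x hx z else M x z
  have hM : M = diagonal (fun x => if x ∈ S then c else 1) * N' := by
    ext x z
    by_cases hx : x ∈ S <;> simp [N', hx, hN]
  rw [hM, det_mul, det_diagonal, prod_ite_mem, univ_inter, prod_const]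
  exact dvd_mul_right _ _

theorem charmatrix_apply_eq_sub (A : Matrix n n R) (x z : n) :
    A.charmatrix x z = (X + 1) * (if x = z then 1 else 0) - C ((A + 1) x z) := by
  by_cases h : x = z <;> simp [h]

theorem pow_dvd_charpoly_of_row_add_one_eq (A : Matrix n n R) (r : n → n)
    (hr : ∀ x, r (r x) = r x) (hrow : ∀ x, (A + 1) (r x) = (A + 1) x) :
    (X + 1 : R[X]) ^ #{x | r x ≠ x} ∣ A.charpoly := by
  -- `1 - F` subtracts row `r x` from row `x` whenever `r x ≠ x`; it is unimodular as `F * F = 0`.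
  let F : Matrix n n R[X] := of fun x z => if r x ≠ x ∧ z = r x then 1 else 0
  have hF : F * F = 0 := by
    refine Matrix.ext fun x z => ?_
    rw [mul_apply, zero_apply]
    refine Finset.sum_eq_zero fun y _ => ?_
    by_cases hy : r x ≠ x ∧ y = r x
    · simp [F, hy.2, hr]
    · simp [F, hy]
  have hunit : IsUnit (1 - F).det :=
    (isUnit_iff_isUnit_det _).mp (IsNilpotent.isUnit_one_sub ⟨2, by rw [sq, hF]⟩)
  have hrows : ∀ x ∈ ({x | r x ≠ x} : Finset n), ∀ z,
      (X + 1 : R[X]) ∣ ((1 - F) * A.charmatrix) x z := by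
    intro x hx z
    have hFC : (F * A.charmatrix) x z = A.charmatrix (r x) z := by
      rw [mul_apply, sum_eq_single (r x)] <;> simp_all [F]
    rw [sub_mul, one_mul, sub_apply, hFC, charmatrix_apply_eq_sub, charmatrix_apply_eq_sub, hrow]
    exact ⟨(if x = z then 1 else 0) - (if r x = z then 1 else 0), by ring⟩
  have := pow_card_dvd_det_of_dvd_row _ _ _ hrows
  rwa [det_mul, ← charpoly, hunit.dvd_mul_left] at this

end Matrix

section PowerGraph

open AddSubgroup

variable {G : Type*} [AddGroup G]

open Classical in
theorem adjMat_addPowerGraph_add_one_apply [Fintype G] [DecidableEq G] (x z : G) :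
    (adjMat (addPowerGraph G) + 1) x z =
      if zmultiples x ≤ zmultiples z ∨ zmultiples z ≤ zmultiples x then 1 else 0 := by
  by_cases h : x = z
  · simp [h, adjMat]
  · simp [adjMat, addPowerGraph, h, zmultiples_le]

theorem adjMat_addPowerGraph_add_one_row_eq [Fintype G] [DecidableEq G] {x y : G}
    (h : zmultiples x = zmultiples y) :
    (adjMat (addPowerGraph G) + 1) x = (adjMat (addPowerGraph G) + 1) y :=
  funext fun z => by
    rw [adjMat_addPowerGraph_add_one_apply, adjMat_addPowerGraph_add_one_apply, h]

noncomputable def zmultiplesRep (x : G) : G :=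
  Function.invFun zmultiples (zmultiples x)

theorem zmultiples_zmultiplesRep (x : G) : zmultiples (zmultiplesRep x) = zmultiples x :=
  Function.invFun_eq ⟨x, rfl⟩

theorem zmultiplesRep_eq_iff {x y : G} :
    zmultiplesRep x = zmultiplesRep y ↔ zmultiples x = zmultiples y := by
  refine ⟨fun h => ?_, fun h => congrArg (Function.invFun zmultiples) h⟩
  rw [← zmultiples_zmultiplesRep x, h, zmultiples_zmultiplesRep]

theorem zmultiplesRep_zmultiplesRep (x : G) :
    zmultiplesRep (zmultiplesRep x) = zmultiplesRep x :=
  zmultiplesRep_eq_iff.mpr (zmultiples_zmultiplesRep x)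

theorem addOrderOf_zmultiplesRep (x : G) : addOrderOf (zmultiplesRep x) = addOrderOf x := by
  rw [← Nat.card_zmultiples, zmultiples_zmultiplesRep, Nat.card_zmultiples]

theorem zmultiples_eq_zmultiples_iff_of_finite [Finite G] {x y : G} :
    zmultiples y = zmultiples x ↔ y ∈ zmultiples x ∧ addOrderOf y = addOrderOf x := by
  refine ⟨fun h => ⟨h ▸ mem_zmultiples y, ?_⟩, fun ⟨hy, hord⟩ => ?_⟩
  · rw [← Nat.card_zmultiples, h, Nat.card_zmultiples]
  · refine eq_of_le_of_card_ge (zmultiples_le.mpr hy) ?_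
    rw [Nat.card_zmultiples, Nat.card_zmultiples, hord]

variable [Fintype G]

open Classical in
theorem card_filter_zmultiples_eq (x : G) :
    #{y | zmultiples y = zmultiples x} = φ (addOrderOf x) := by
  have hcard : addOrderOf x ∣ Fintype.card (zmultiples x) := by
    rw [← Nat.card_eq_fintype_card, Nat.card_zmultiples]
  rw [← IsAddCyclic.card_addOrderOf_eq_totient hcard, ← card_map (Function.Embedding.subtype _)]
  congr 1
  ext y
  simp only [mem_map, mem_filter, mem_univ, true_and, Function.Embedding.coe_subtype,
    Subtype.exists, AddSubgroup.addOrderOf_mk, exists_and_right, exists_eq_right,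
    exists_prop, zmultiples_eq_zmultiples_iff_of_finite]

variable [DecidableEq G]

theorem card_filter_zmultiplesRep_eq_self (d : ℕ) :
    #{x : G | addOrderOf x = d ∧ zmultiplesRep x = x} = numCyclicSubgroups G d := by
  rw [numCyclicSubgroups, ← Nat.card_eq_finsetCard]
  refine Nat.card_congr (Equiv.ofBijective
    (fun x => ⟨zmultiples x.1, inferInstance, by
      rw [Nat.card_zmultiples]; exact (mem_filter.mp x.2).2.1⟩) ⟨?_, ?_⟩)
  · rintro ⟨x, hx⟩ ⟨y, hy⟩ h
    simp only [mem_filter, mem_univ, true_and, Subtype.mk.injEq] at hx hy h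
    rw [Subtype.mk.injEq, ← hx.2, ← hy.2]
    exact zmultiplesRep_eq_iff.mpr h
  · rintro ⟨H, hcyc, hcard⟩
    obtain ⟨g, rfl⟩ := (AddSubgroup.isAddCyclic_iff_exists_zmultiples_eq_top H).mp hcyc
    rw [Nat.card_zmultiples] at hcard
    refine ⟨⟨zmultiplesRep g, ?_⟩, ?_⟩
    · simp [zmultiplesRep_zmultiplesRep, addOrderOf_zmultiplesRep, hcard]
    · simp [zmultiples_zmultiplesRep]

theorem card_filter_addOrderOf_eq_numCyclicSubgroups_mul_totient (d : ℕ) :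
    #{x : G | addOrderOf x = d} = numCyclicSubgroups G d * φ d := by
  rw [← card_filter_zmultiplesRep_eq_self, card_eq_sum_card_fiberwise (f := zmultiplesRep)
    (t := {x : G | addOrderOf x = d ∧ zmultiplesRep x = x}), ← smul_eq_mul, ← sum_const]
  · refine sum_congr rfl fun y hy => ?_
    obtain ⟨rfl, hfix⟩ := (mem_filter.mp hy).2
    rw [← card_filter_zmultiples_eq y]
    congr 1
    ext x
    simp only [mem_filter, mem_univ, true_and]
    constructor
    · rintro ⟨-, h⟩
      rw [← zmultiplesRep_eq_iff, h, hfix]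
    · intro h
      refine ⟨by rw [← Nat.card_zmultiples, h, Nat.card_zmultiples], ?_⟩
      rw [zmultiplesRep_eq_iff.mpr h, hfix]
  · intro x hx
    simp_all [zmultiplesRep_zmultiplesRep, addOrderOf_zmultiplesRep]

theorem card_filter_zmultiplesRep_ne :
    #{x : G | zmultiplesRep x ≠ x} =
      ∑ d ∈ (Nat.card G).divisors, numCyclicSubgroups G d * (φ d - 1) := by
  rw [card_eq_sum_card_fiberwise (f := addOrderOf) (t := (Nat.card G).divisors)]
  · refine sum_congr rfl fun d _ => ?_
    have hsplit := card_filter_add_card_filter_not (s := {x : G | addOrderOf x = d})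
      (fun x => zmultiplesRep x = x)
    simp only [filter_filter, card_filter_zmultiplesRep_eq_self,
      card_filter_addOrderOf_eq_numCyclicSubgroups_mul_totient] at hsplit
    rw [filter_filter, Nat.mul_sub_one]
    simp only [ne_eq, and_comm] at hsplit ⊢
    omega
  · intro x _
    simpa using addOrderOf_dvd_natCard x

theorem pow_dvd_charpoly_adjMat_addPowerGraph :
    (X + 1 : ℤ[X]) ^ (∑ d ∈ (Nat.card G).divisors, numCyclicSubgroups G d * (φ d - 1)) ∣
      (adjMat (addPowerGraph G)).charpoly := by
  rw [← card_filter_zmultiplesRep_ne]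
  exact Matrix.pow_dvd_charpoly_of_row_add_one_eq _ _ zmultiplesRep_zmultiplesRep
    fun x => adjMat_addPowerGraph_add_one_row_eq (zmultiples_zmultiplesRep x)

theorem le_numCyclicSubgroups_of_mul_totient_le {k d : ℕ} (hd : 0 < d)
    (h : k * φ d ≤ #{x : G | addOrderOf x = d}) : k ≤ numCyclicSubgroups G d := by
  rw [card_filter_addOrderOf_eq_numCyclicSubgroups_mul_totient] at h
  exact Nat.le_of_mul_le_mul_right h (Nat.totient_pos.mpr hd)

end PowerGraph

theorem Finset.sum_eq_sum_filter_sq_dvd_add {M : Type*} [AddCommMonoid M] (s : Finset ℕ)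
    (p : ℕ) (f : ℕ → M) :
    ∑ d ∈ s, f d = ∑ d ∈ s with p ^ 2 ∣ d, f d + ∑ d ∈ s with p ∣ d ∧ ¬p ^ 2 ∣ d, f d +
      ∑ d ∈ s with ¬p ∣ d, f d := by
  rw [← sum_filter_add_sum_filter_not s (p ∣ ·),
    ← sum_filter_add_sum_filter_not (s.filter (p ∣ ·)) (p ^ 2 ∣ ·), filter_filter, filter_filter]
  congr 3
  ext d
  have : p ^ 2 ∣ d → p ∣ d := (Dvd.intro_left _ (sq p).symm).trans
  simp only [mem_filter]
  tauto

theorem ZMod.addOrderOf_dvd {p : ℕ} (a : ZMod p) : addOrderOf a ∣ p := by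
  simpa using addOrderOf_dvd_natCard a

section ZModProd

variable {p n d : ℕ} [NeZero p] [NeZero n]

theorem ZMod.card_filter_addOrderOf_eq (hd : d ∣ n) :
    #{b : ZMod n | addOrderOf b = d} = φ d :=
  IsAddCyclic.card_addOrderOf_eq_totient (by rwa [ZMod.card])

theorem product_filter_addOrderOf_subset {S : Finset (ZMod p)} {e : ℕ}
    (hS : ∀ a ∈ S, (addOrderOf a).lcm e = d) :
    S ×ˢ ({b | addOrderOf b = e} : Finset (ZMod n)) ⊆
      ({x | addOrderOf x = d} : Finset (ZMod p × ZMod n)) := by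
  intro x hx
  rw [mem_product, mem_filter] at hx
  simpa [Prod.addOrderOf, hx.2.2] using hS _ hx.1

theorem totient_le_card_filter_addOrderOf_zmod_prod (hdn : d ∣ n) :
    φ d ≤ #{x : ZMod p × ZMod n | addOrderOf x = d} :=
  calc φ d = #({(0 : ZMod p)} ×ˢ ({b | addOrderOf b = d} : Finset (ZMod n))) := by
        rw [card_product, card_singleton, one_mul, ZMod.card_filter_addOrderOf_eq hdn]
    _ ≤ _ := card_le_card <| product_filter_addOrderOf_subset fun a ha => by
        rw [mem_singleton.mp ha, addOrderOf_zero, Nat.lcm_one_left]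

theorem mul_totient_le_card_filter_addOrderOf_zmod_prod (hpd : p ∣ d) (hdn : d ∣ n) :
    p * φ d ≤ #{x : ZMod p × ZMod n | addOrderOf x = d} :=
  calc p * φ d = #((univ : Finset (ZMod p)) ×ˢ ({b | addOrderOf b = d} : Finset (ZMod n))) := by
        rw [card_product, card_univ, ZMod.card, ZMod.card_filter_addOrderOf_eq hdn]
    _ ≤ _ := card_le_card <| product_filter_addOrderOf_subset fun a _ =>
        Nat.lcm_eq_right ((ZMod.addOrderOf_dvd a).trans hpd)

theorem succ_mul_totient_le_card_filter_addOrderOf_zmod_prod (hp : p.Prime) (hpd : p ∣ d)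
    (hpd2 : ¬p ^ 2 ∣ d) (hdn : d ∣ n) :
    (p + 1) * φ d ≤ #{x : ZMod p × ZMod n | addOrderOf x = d} := by
  obtain ⟨e, rfl⟩ := hpd
  have hpe : p.Coprime e := (Nat.Prime.coprime_iff_not_dvd hp).mpr fun h =>
    hpd2 (by rw [sq]; exact mul_dvd_mul_left p h)
  have he : e < p * e := (Nat.lt_mul_iff_one_lt_left (Nat.pos_of_mul_pos_left
    (Nat.pos_of_dvd_of_pos hdn (Nat.pos_of_neZero n)))).mpr hp.one_lt
  let T₁ := (univ : Finset (ZMod p)) ×ˢ ({b | addOrderOf b = p * e} : Finset (ZMod n))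
  let T₂ := (univ.erase 0 : Finset (ZMod p)) ×ˢ ({b | addOrderOf b = e} : Finset (ZMod n))
  have hdisj : Disjoint T₁ T₂ := disjoint_product.mpr <| Or.inr <|
    disjoint_filter.mpr fun b _ h₁ h₂ => he.ne (h₂.symm.trans h₁)
  have hT₂ : T₂ ⊆ ({x | addOrderOf x = p * e} : Finset (ZMod p × ZMod n)) := by
    refine product_filter_addOrderOf_subset fun a ha => ?_
    have := Fact.mk hp
    rw [addOrderOf_eq_prime (p := p) (by simp) (ne_of_mem_erase ha), hpe.lcm_eq_mul]
  calc (p + 1) * φ (p * e) = #T₁ + #T₂ := by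
        rw [card_product, card_product, card_univ, card_erase_of_mem (mem_univ _), card_univ,
          ZMod.card, ZMod.card_filter_addOrderOf_eq hdn,
          ZMod.card_filter_addOrderOf_eq (dvd_of_mul_left_dvd hdn), Nat.totient_mul hpe,
          Nat.totient_prime hp]
        ring
    _ = #(T₁ ∪ T₂) := (card_union_of_disjoint hdisj).symm
    _ ≤ _ := card_le_card <| union_subset
        (product_filter_addOrderOf_subset fun a _ =>
          Nat.lcm_eq_right ((ZMod.addOrderOf_dvd a).trans (dvd_mul_right p e))) hT₂

theorem le_sum_numCyclicSubgroups_zmod_prod (hp : p.Prime) :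
    p * ∑ d ∈ n.divisors with p ^ 2 ∣ d, (φ d - 1) +
        (p + 1) * ∑ d ∈ n.divisors with p ∣ d ∧ ¬p ^ 2 ∣ d, (φ d - 1) +
        ∑ d ∈ n.divisors with ¬p ∣ d, (φ d - 1) ≤
      ∑ d ∈ n.divisors, numCyclicSubgroups (ZMod p × ZMod n) d * (φ d - 1) := by
  have hc : ∀ d ∈ n.divisors, ∀ k, k * φ d ≤ #{x : ZMod p × ZMod n | addOrderOf x = d} →
      k * (φ d - 1) ≤ numCyclicSubgroups (ZMod p × ZMod n) d * (φ d - 1) := fun d hd k h =>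
    Nat.mul_le_mul_right _ (le_numCyclicSubgroups_of_mul_totient_le (Nat.pos_of_mem_divisors hd) h)
  rw [sum_eq_sum_filter_sq_dvd_add n.divisors p, mul_sum, mul_sum]
  refine add_le_add (add_le_add (sum_le_sum fun d hd => ?_) (sum_le_sum fun d hd => ?_))
    (sum_le_sum fun d hd => ?_) <;> obtain ⟨hd, hpd⟩ := mem_filter.mp hd
  · exact hc d hd p (mul_totient_le_card_filter_addOrderOf_zmod_prod
      ((dvd_pow_self p two_ne_zero).trans hpd) (Nat.dvd_of_mem_divisors hd))
  · exact hc d hd (p + 1) (succ_mul_totient_le_card_filter_addOrderOf_zmod_prod hp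
      hpd.1 hpd.2 (Nat.dvd_of_mem_divisors hd))
  · simpa using hc d hd 1 (by simpa using
      totient_le_card_filter_addOrderOf_zmod_prod (p := p) (Nat.dvd_of_mem_divisors hd))

end ZModProd

theorem charpoly_power_graph_Zp_Zn_general (p n : ℕ) (hp : p.Prime) [NeZero n] :
    letI : NeZero p := ⟨hp.ne_zero⟩
    ((X : Polynomial ℤ) + 1) ^
        (p * ∑ d ∈ n.divisors.filter (fun d => p ^ 2 ∣ d), (Nat.totient d - 1) +
         (p + 1) * ∑ d ∈ n.divisors.filter (fun d => p ∣ d ∧ ¬ p ^ 2 ∣ d), (Nat.totient d - 1) +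
         ∑ d ∈ n.divisors.filter (fun d => ¬ p ∣ d), (Nat.totient d - 1)) ∣
      Matrix.charpoly (adjMat (addPowerGraph (ZMod p × ZMod n))) := by
  have : NeZero p := ⟨hp.ne_zero⟩
  have hdvd : n ∣ Nat.card (ZMod p × ZMod n) := by
    rw [Nat.card_prod, Nat.card_zmod, Nat.card_zmod]
    exact dvd_mul_left n p
  refine (pow_dvd_pow _ ?_).trans pow_dvd_charpoly_adjMat_addPowerGraph
  exact (le_sum_numCyclicSubgroups_zmod_prod hp).trans
    (sum_le_sum_of_subset (Nat.divisors_subset_of_dvd Nat.card_pos.ne' hdvd))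

/-- For a prime `p` dividing `n`, `(X + 1) ^ α` divides the characteristic polynomial of
the adjacency matrix of the power graph of `Z_p × Z_n`, where
`α = p Σ_{d ∣ n, p² ∣ d} (φ(d)-1) + (p+1) Σ_{d ∣ n, p ∣ d, p² ∤ d} (φ(d)-1)
  + Σ_{d ∣ n, p ∤ d} (φ(d)-1)`. -/
theorem charpoly_power_graph_Zp_Zn (p n : ℕ) (hp : p.Prime) [NeZero n] (hpn : p ∣ n) :
    letI : NeZero p := ⟨hp.ne_zero⟩
    ((X : Polynomial ℤ) + 1) ^
        (p * ∑ d ∈ n.divisors.filter (fun d => p ^ 2 ∣ d), (Nat.totient d - 1) +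
         (p + 1) * ∑ d ∈ n.divisors.filter (fun d => p ∣ d ∧ ¬ p ^ 2 ∣ d), (Nat.totient d - 1) +
         ∑ d ∈ n.divisors.filter (fun d => ¬ p ∣ d), (Nat.totient d - 1)) ∣
      Matrix.charpoly (adjMat (addPowerGraph (ZMod p × ZMod n))) :=
  charpoly_power_graph_Zp_Zn_general p n hp
end

section
/- Let p be a prime and n a positive integer with p dividing n but p² not dividing n, and let G = Z_{p²} × Z_n. Then (X + 1)^α divides the characteristic polynomial of the adjacency matrix of the power graph P(G), where α = Σ_{d ∣ n, p ∤ d} (φ(d) − 1) + (p+1)·Σ_{d ∣ n, p ∣ d} (φ(d) − 1) + p·Σ_{d ∣ n, p ∤ d} (φ(d·p²) − 1). -/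
open Polynomial

/-!
Two elements generating the same cyclic subgroup are closed twins in the power graph, so the
corresponding columns of `A + 1` coincide. Subtracting such columns in `X • 1 - A` leaves
columns divisible by `X + 1`, whence `(X + 1) ^ (|G| - c(G))` divides the characteristic
polynomial, `c(G)` being the number of cyclic subgroups. A cyclic subgroup of order `k` has
`φ k` generators, so `|G| - c(G)` is at least `∑ (φ |H| - 1)` over any family of distinct cyclic
subgroups `H`. For `G = Z_{p²} × Z_n` with `p ∥ n` one exhibits, for each `d ∣ n`, one cyclic
subgroup of order `d` and `p` of order `d p²` if `p ∤ d`, and `p + 1` of order `d` if `p ∣ d`.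
-/

open Finset Matrix AddSubgroup

namespace Matrix

variable {R V : Type*} [CommRing R] [Fintype V] [DecidableEq V]

theorem pow_card_dvd_det_of_col_eq (q : R) (r : V → V) (S : Finset V)
    (hr : ∀ x ∈ S, r x ∉ S) (M : Matrix V V R)
    (hM : ∀ x ∈ S, Mᵀ x = q • (Pi.single x 1 - Pi.single (r x) 1) + Mᵀ (r x)) :
    q ^ #S ∣ M.det := by
  induction S using Finset.induction_on generalizing M with
  | empty => simp
  | @insert a S haS ih =>
    have hra : r a ≠ a := fun h =>
      hr a (mem_insert_self a S) (by rw [h]; exact mem_insert_self a S)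
    set d : V → R := Pi.single a 1 - Pi.single (r a) 1
    have hcol : M = M.updateCol a (q • d + Mᵀ (r a)) := by
      rw [← hM a (mem_insert_self a S)]
      ext i j
      by_cases hj : j = a <;> simp [hj]
    have hzero : (M.updateCol a (Mᵀ (r a))).det = 0 :=
      det_zero_of_column_eq hra.symm fun i => by simp [hra]
    have hS : q ^ #S ∣ (M.updateCol a d).det := by
      refine ih (fun x hx h => hr x (mem_insert_of_mem hx) (mem_insert_of_mem h)) _ fun x hx => ?_
      have hxa : x ≠ a := fun h => haS (h ▸ hx)
      have hrxa : r x ≠ a := fun h => hr x (mem_insert_of_mem hx) (h ▸ mem_insert_self a S)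
      ext i
      simpa [updateCol_ne hxa, updateCol_ne hrxa] using
        congrFun (hM x (mem_insert_of_mem hx)) i
    rw [hcol, det_updateCol_add, det_updateCol_smul, hzero, add_zero, card_insert_of_notMem haS,
      pow_succ']
    exact mul_dvd_mul_left q hS

theorem pow_card_sub_card_image_dvd_det {β : Type*} [DecidableEq β] (q : R) (f : V → β)
    (M : Matrix V V R)
    (hM : ∀ x y, f x = f y → Mᵀ x = q • (Pi.single x 1 - Pi.single y 1) + Mᵀ y) :
    q ^ (Fintype.card V - #(univ.image f)) ∣ M.det := by
  cases isEmpty_or_nonempty V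
  · simp
  set r : V → V := Function.invFun f ∘ f
  have hfr : ∀ x, f (r x) = f x := fun x => Function.invFun_eq ⟨x, rfl⟩
  have hcard : #(univ.image r) = #(univ.image f) := by
    rw [show univ.image r = (univ.image f).image (Function.invFun f) by simp [r, image_image]]
    refine card_image_of_injOn fun b hb b' hb' h => ?_
    obtain ⟨x, -, rfl⟩ := mem_image.mp hb
    obtain ⟨x', -, rfl⟩ := mem_image.mp hb'
    simpa only [Function.invFun_eq ⟨_, rfl⟩] using congrArg f h
  have hS := pow_card_dvd_det_of_col_eq q r (univ.image r)ᶜ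
    (fun x _ => by simp) M (fun x _ => hM x (r x) (hfr x).symm)
  rwa [card_compl, hcard] at hS

end Matrix

open Classical in
theorem adjMat_add_one_apply {V : Type*} [Fintype V] [DecidableEq V] (Γ : SimpleGraph V)
    (i j : V) : (adjMat Γ + 1) i j = if i = j ∨ Γ.Adj i j then 1 else 0 := by
  by_cases h : i = j
  · subst h
    simp [adjMat]
  · simp [adjMat, one_apply, h]

theorem adjMat_add_one_col_eq {V : Type*} [Fintype V] [DecidableEq V]
    (Γ : SimpleGraph V) {x y : V} (hxy : ∀ z, z = x ∨ Γ.Adj z x ↔ z = y ∨ Γ.Adj z y) :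
    (adjMat Γ + 1)ᵀ x = (adjMat Γ + 1)ᵀ y := by
  classical
  funext i
  simp only [transpose_apply, adjMat_add_one_apply]
  exact if_congr (hxy i) rfl rfl

theorem charmatrix_adjMat_col_eq {V : Type*} [Fintype V] [DecidableEq V]
    (Γ : SimpleGraph V) {x y : V} (hxy : ∀ z, z = x ∨ Γ.Adj z x ↔ z = y ∨ Γ.Adj z y) :
    (charmatrix (adjMat Γ))ᵀ x =
      (X + 1 : ℤ[X]) • (Pi.single x 1 - Pi.single y 1) + (charmatrix (adjMat Γ))ᵀ y := by
  funext i
  have h := congrArg (C : ℤ →+* ℤ[X]) (congrFun (adjMat_add_one_col_eq Γ hxy) i)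
  simp only [transpose_apply, Matrix.add_apply, one_apply, map_add, apply_ite C, map_one,
    map_zero] at h
  simp only [transpose_apply, charmatrix_apply, diagonal_apply, Pi.add_apply, Pi.smul_apply,
    Pi.sub_apply, Pi.single_apply, smul_eq_mul]
  split_ifs at h ⊢ <;> linear_combination -h

theorem pow_dvd_charpoly_adjMat_of_closedNbhd_eq {V β : Type*} [Fintype V] [DecidableEq V]
    [DecidableEq β] (Γ : SimpleGraph V) (f : V → β)
    (hf : ∀ x y, f x = f y → ∀ z, z = x ∨ Γ.Adj z x ↔ z = y ∨ Γ.Adj z y) :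
    (X + 1 : ℤ[X]) ^ (Fintype.card V - #(univ.image f)) ∣ (adjMat Γ).charpoly :=
  Matrix.pow_card_sub_card_image_dvd_det _ f _ fun x y h => charmatrix_adjMat_col_eq Γ (hf x y h)

theorem eq_or_addPowerGraph_adj_iff {G : Type*} [AddGroup G] (z x : G) :
    z = x ∨ (addPowerGraph G).Adj z x ↔ z ∈ zmultiples x ∨ zmultiples x ≤ zmultiples z := by
  by_cases h : z = x
  · subst h
    simp [mem_zmultiples]
  · simp [addPowerGraph, h, zmultiples_le]

theorem pow_dvd_charpoly_adjMat_addPowerGraph_s15 (G : Type*) [AddGroup G] [Fintype G]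
    [DecidableEq G] [DecidableEq (AddSubgroup G)] :
    (X + 1 : ℤ[X]) ^ (Fintype.card G - #(univ.image (zmultiples : G → AddSubgroup G))) ∣
      (adjMat (addPowerGraph G)).charpoly :=
  pow_dvd_charpoly_adjMat_of_closedNbhd_eq _ _ fun x y h z => by
    rw [eq_or_addPowerGraph_adj_iff, eq_or_addPowerGraph_adj_iff, h]

theorem totient_addOrderOf_le_card_zmultiples_eq {G : Type*} [AddGroup G] [Fintype G]
    [DecidableEq (AddSubgroup G)] (x : G) :
    Nat.totient (addOrderOf x) ≤ #{y | zmultiples y = zmultiples x} := by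
  classical
  have hcard : addOrderOf x ∣ Fintype.card (zmultiples x) := by
    rw [Fintype.card_zmultiples]
  rw [← IsAddCyclic.card_addOrderOf_eq_totient hcard]
  refine card_le_card_of_injOn (fun a => (a : G)) (fun a ha => ?_) Subtype.coe_injective.injOn
  simp only [coe_filter, mem_univ, true_and, Set.mem_ofPred_eq] at ha ⊢
  refine eq_of_le_of_card_ge (zmultiples_le.mpr a.2) ?_
  rw [Nat.card_zmultiples, Nat.card_zmultiples, addOrderOf_coe, ha]

theorem sum_card_fiber_sub_one_le {V β ι : Type*} [Fintype V] [DecidableEq β] (f : V → β)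
    (s : Finset ι) (g : ι → β) (hg : Set.InjOn g s) :
    ∑ i ∈ s, (#{x | f x = g i} - 1) ≤ Fintype.card V - #(univ.image f) := by
  have hfiber : ∀ b ∈ univ.image f, 1 ≤ #{x | f x = b} := by
    intro b hb
    obtain ⟨x, -, rfl⟩ := mem_image.mp hb
    exact card_pos.mpr ⟨x, by simp⟩
  calc ∑ i ∈ s, (#{x | f x = g i} - 1) = ∑ b ∈ s.image g, (#{x | f x = b} - 1) := by
        rw [sum_image hg]
    _ ≤ ∑ b ∈ univ.image f, (#{x | f x = b} - 1) := by
        refine sum_le_sum_of_ne_zero fun b _ hb => ?_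
        obtain ⟨x, hx⟩ := card_pos.mp (show 0 < #{x | f x = b} by omega)
        exact mem_image.mpr ⟨x, mem_univ x, (mem_filter.mp hx).2⟩
    _ = Fintype.card V - #(univ.image f) := by
        rw [sum_tsub_distrib _ hfiber, ← card_eq_sum_card_image, ← card_eq_sum_ones, card_univ]

namespace ZMod

theorem addOrderOf_natCast_div {n d : ℕ} [NeZero n] (hd : d ∣ n) :
    addOrderOf ((n / d : ℕ) : ZMod n) = d := by
  rw [addOrderOf_coe _ (NeZero.ne n), Nat.gcd_eq_right (Nat.div_dvd_of_dvd hd),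
    Nat.div_div_self hd (NeZero.ne n)]

theorem addOrderOf_natCast_dvd {N a e : ℕ} (h : N ∣ e * a) : addOrderOf (a : ZMod N) ∣ e :=
  addOrderOf_dvd_of_nsmul_eq_zero <| by
    rw [nsmul_eq_mul, ← Nat.cast_mul, natCast_eq_zero_iff]
    exact h

theorem intCast_dvd_sub_of_zsmul_eq {N a b : ℕ} {c : ℤ} (h : c • (a : ZMod N) = b) :
    (N : ℤ) ∣ c * a - b := by
  rw [← intCast_zmod_eq_zero_iff_dvd]
  push_cast
  rw [← zsmul_eq_mul, h, sub_self]

end ZMod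

theorem Int.natCast_dvd_of_dvd_mul_div {n d : ℕ} [NeZero n] (hd : d ∣ n) {a : ℤ}
    (h : (n : ℤ) ∣ a * (n / d : ℕ)) : (d : ℤ) ∣ a := by
  refine Int.dvd_of_mul_dvd_mul_right (a := ((n / d : ℕ) : ℤ)) ?_ ?_
  · exact_mod_cast (Nat.div_pos (Nat.le_of_dvd (Nat.pos_of_neZero n) hd)
      (Nat.pos_of_dvd_of_pos hd (Nat.pos_of_neZero n))).ne'
  · rwa [← Nat.cast_mul, Nat.mul_div_cancel' hd]

theorem eq_of_intCast_dvd_mul_sub {p j j' : ℕ} {c : ℤ} (hc : (p : ℤ) ∣ c - 1)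
    (h : (p : ℤ) ∣ c * j - j') (hj : j < p) (hj' : j' < p) : j = j' := by
  have hjj : (p : ℤ) ∣ j - j' := by
    have := dvd_sub h (hc.mul_right j)
    rwa [show c * j - j' - (c - 1) * j = (j : ℤ) - j' by ring] at this
  exact (Nat.ModEq.eq_of_lt_of_lt (Nat.modEq_iff_dvd.mpr hjj) hj' hj).symm

/-- For `d ∣ n` and `j ≤ p`, the subgroups `⟨gen p n d j⟩` are: if `p ∣ d`, the `p + 1` cyclic
subgroups of order `d` (their `p`-torsion runs over the `p + 1` lines of `Z_p × Z_p`); if `p ∤ d`,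
the one of order `d` (`j = p`) and `p` of order `d p²` (`j < p`). -/
def gen (p n d j : ℕ) : ZMod (p ^ 2) × ZMod n :=
  if p ∣ d then
    if j = p then ((p : ZMod (p ^ 2)), ((p * (n / d) : ℕ) : ZMod n))
    else (((p * j : ℕ) : ZMod (p ^ 2)), ((n / d : ℕ) : ZMod n))
  else
    if j = p then (0, ((n / d : ℕ) : ZMod n))
    else (1, ((j * (n / p) : ℕ) : ZMod n)) + (0, ((n / d : ℕ) : ZMod n))

def genOrder (p d j : ℕ) : ℕ := if p ∣ d ∨ j = p then d else d * p ^ 2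

section Generators

variable {p n : ℕ}

theorem addOrderOf_gen (hp : p.Prime) [NeZero n] (hpn : p ∣ n) (hpn2 : ¬p ^ 2 ∣ n)
    {d : ℕ} (j : ℕ) (hd : d ∣ n) : addOrderOf (gen p n d j) = genOrder p d j := by
  have hcop : ∀ {e}, ¬p ∣ e → p.Coprime e := (hp.coprime_iff_not_dvd).mpr
  have : NeZero (p ^ 2) := ⟨pow_ne_zero 2 hp.ne_zero⟩
  by_cases hpd : p ∣ d
  · obtain ⟨e, rfl⟩ := hpd
    by_cases hjp : j = p
    · have hpe : ¬p ∣ e := fun h => hpn2 (by rw [sq]; exact (mul_dvd_mul_left p h).trans hd)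
      have hp_ord : addOrderOf ((p : ℕ) : ZMod (p ^ 2)) = p := by
        rw [ZMod.addOrderOf_coe _ (NeZero.ne _), Nat.gcd_eq_right (dvd_pow_self p two_ne_zero),
          sq, Nat.mul_div_cancel _ hp.pos]
      have hdiv : p * (n / (p * e)) = n / e := by
        obtain ⟨k, rfl⟩ := hd
        have he : 0 < e := Nat.pos_of_ne_zero fun he => NeZero.ne (p * e * k) (by simp [he])
        rw [Nat.mul_div_cancel_left k (Nat.mul_pos hp.pos he), show p * e * k = p * k * e by ring,
          Nat.mul_div_cancel _ he]
      simp only [gen, genOrder, dvd_mul_right, if_true, true_or, hjp]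
      rw [Prod.addOrderOf_mk, hp_ord, hdiv,
        ZMod.addOrderOf_natCast_div ((dvd_mul_left e p).trans hd), (hcop hpe).lcm_eq_mul]
    · have hord : addOrderOf ((p * j : ℕ) : ZMod (p ^ 2)) ∣ p * e :=
        (ZMod.addOrderOf_natCast_dvd ⟨j, by ring⟩).trans (dvd_mul_right p e)
      simp only [gen, genOrder, dvd_mul_right, if_true, true_or, hjp, if_false]
      rw [Prod.addOrderOf_mk, ZMod.addOrderOf_natCast_div hd, Nat.lcm_eq_right hord]
  · by_cases hjp : j = p
    · simp only [gen, genOrder, hpd, hjp, if_true, if_false, or_true]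
      rw [Prod.addOrderOf_mk, ZMod.addOrderOf_natCast_div hd, addOrderOf_zero, Nat.lcm_one_left]
    · have hfst :
          addOrderOf ((1, ((j * (n / p) : ℕ) : ZMod n)) : ZMod (p ^ 2) × ZMod n) = p ^ 2 := by
        rw [Prod.addOrderOf_mk, ZMod.addOrderOf_one, Nat.lcm_eq_left]
        refine (ZMod.addOrderOf_natCast_dvd ⟨j, ?_⟩).trans (dvd_pow_self p two_ne_zero)
        rw [mul_left_comm, Nat.mul_div_cancel' hpn, mul_comm]
      have hsnd : addOrderOf (((0 : ZMod (p ^ 2)), ((n / d : ℕ) : ZMod n))) = d := by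
        rw [Prod.addOrderOf_mk, ZMod.addOrderOf_natCast_div hd, addOrderOf_zero, Nat.lcm_one_left]
      simp only [gen, genOrder, hpd, hjp, if_false, or_self]
      rw [(AddCommute.all _ _).addOrderOf_add_eq_mul_addOrderOf_of_coprime
        (by rw [hfst, hsnd]; exact (hcop hpd).pow_left 2), hfst, hsnd, mul_comm]

theorem eq_of_genOrder_eq (hp : p.Prime) (hpn2 : ¬p ^ 2 ∣ n) {d d' j j' : ℕ}
    (hd : d ∣ n) (hd' : d' ∣ n) (h : genOrder p d j = genOrder p d' j') :
    d = d' ∧ (p ∣ d ∨ j = p ↔ p ∣ d' ∨ j' = p) := by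
  have hp2 : 0 < p ^ 2 := pow_pos hp.pos 2
  unfold genOrder at h
  split_ifs at h with h₁ h₂ h₂
  · exact ⟨h, iff_of_true h₁ h₂⟩
  · exact absurd ((Dvd.intro_left d' h.symm).trans hd) hpn2
  · exact absurd ((Dvd.intro_left d h).trans hd') hpn2
  · exact ⟨Nat.eq_of_mul_eq_mul_right hp2 h, iff_of_false h₁ h₂⟩

theorem zsmul_gen_self_ne (hp : p.Prime) [NeZero n] {d j : ℕ} {c : ℤ} (hd : d ∣ n)
    (hpd : p ∣ d) (hj : j < p) : c • gen p n d p ≠ gen p n d j := by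
  intro h
  simp only [gen, hpd, if_true, hj.ne, if_false, Prod.smul_mk, Prod.mk.injEq] at h
  have h₂ := ZMod.intCast_dvd_sub_of_zsmul_eq h.2
  rw [Nat.cast_mul, ← mul_assoc, ← sub_one_mul] at h₂
  have h₁ : (p : ℤ) ∣ c * p - 1 := (Int.natCast_dvd_natCast.mpr hpd).trans
    (Int.natCast_dvd_of_dvd_mul_div hd h₂)
  have : (p : ℤ) ∣ 1 := by simpa using dvd_sub (dvd_mul_left (p : ℤ) c) h₁
  exact hp.one_lt.ne' (by exact_mod_cast Int.eq_one_of_dvd_one (by positivity) this)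

theorem eq_of_zsmul_gen_eq_gen_of_dvd (hp : p.Prime) [NeZero n] {d j j' : ℕ} {c : ℤ}
    (hd : d ∣ n) (hpd : p ∣ d) (hj : j < p) (hj' : j' < p)
    (h : c • gen p n d j = gen p n d j') : j = j' := by
  simp only [gen, hpd, if_true, hj.ne, hj'.ne, if_false, Prod.smul_mk, Prod.mk.injEq] at h
  have h₁ := ZMod.intCast_dvd_sub_of_zsmul_eq h.1
  have h₂ := ZMod.intCast_dvd_sub_of_zsmul_eq h.2
  rw [← sub_one_mul] at h₂
  have hc : (p : ℤ) ∣ c - 1 :=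
    (Int.natCast_dvd_natCast.mpr hpd).trans (Int.natCast_dvd_of_dvd_mul_div hd h₂)
  have hcj : (p : ℤ) ∣ c * j - j' := by
    refine Int.dvd_of_mul_dvd_mul_left (a := (p : ℤ)) (by exact_mod_cast hp.ne_zero) ?_
    convert h₁ using 1 <;> push_cast <;> ring
  exact eq_of_intCast_dvd_mul_sub hc hcj hj hj'

theorem eq_of_zsmul_gen_eq_gen_of_not_dvd (hp : p.Prime) [NeZero n] (hpn : p ∣ n)
    {d j j' : ℕ} {c : ℤ} (hd : d ∣ n) (hpd : ¬p ∣ d) (hj : j < p) (hj' : j' < p)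
    (h : c • gen p n d j = gen p n d j') : j = j' := by
  simp only [gen, hpd, hj.ne, hj'.ne, if_false, Prod.mk_add_mk, add_zero, Prod.smul_mk,
    Prod.mk.injEq, ← Nat.cast_add] at h
  have h₁ : (p : ℤ) ^ 2 ∣ c - 1 := by
    have := ZMod.intCast_dvd_sub_of_zsmul_eq (N := p ^ 2) (a := 1) (b := 1) (c := c)
      (by simpa using h.1)
    push_cast at this
    simpa using this
  have h₂ := ZMod.intCast_dvd_sub_of_zsmul_eq h.2
  set m := n / p
  set X := n / d
  have hnm : (n : ℤ) = p * m := by exact_mod_cast (Nat.mul_div_cancel' hpn).symm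
  have hnX : (n : ℤ) = d * X := by exact_mod_cast (Nat.mul_div_cancel' hd).symm
  have hm : (m : ℤ) ≠ 0 := by
    have := NeZero.ne n
    rw [← Nat.mul_div_cancel' hpn] at this
    exact_mod_cast right_ne_zero_of_mul this
  -- multiplying by `d` kills the `n / d` component
  have hdiv : (p : ℤ) * m ∣ d * (c * j - j') * m := by
    have key : (d : ℤ) * (c * j - j') * m =
        d * (c * ((j * m + X : ℕ) : ℤ) - ((j' * m + X : ℕ) : ℤ)) - n * (c - 1) := by
      push_cast
      linear_combination (c - 1) * hnX
    rw [← hnm, key]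
    exact dvd_sub (h₂.mul_left (d : ℤ)) (dvd_mul_right (n : ℤ) (c - 1))
  have hcj : (p : ℤ) ∣ c * j - j' :=
    ((Int.Prime.dvd_mul' hp (Int.dvd_of_mul_dvd_mul_right hm hdiv)).resolve_left
      (fun h => hpd (Int.natCast_dvd_natCast.mp h)))
  have hc : (p : ℤ) ∣ c - 1 := (dvd_pow_self (p : ℤ) two_ne_zero).trans h₁
  exact eq_of_intCast_dvd_mul_sub hc hcj hj hj'

theorem injOn_zmultiples_gen (hp : p.Prime) [NeZero n] (hpn : p ∣ n) (hpn2 : ¬p ^ 2 ∣ n) :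
    Set.InjOn (fun dj : ℕ × ℕ => zmultiples (gen p n dj.1 dj.2))
      (n.divisors ×ˢ range (p + 1) : Finset (ℕ × ℕ)) := by
  rintro ⟨d, j⟩ hdj ⟨d', j'⟩ hdj' h
  simp only [coe_product, Set.mem_prod, mem_coe, Nat.mem_divisors, mem_range,
    Nat.lt_succ_iff] at hdj hdj' h
  obtain ⟨⟨hd, -⟩, hj⟩ := hdj
  obtain ⟨⟨hd', -⟩, hj'⟩ := hdj'
  have hord := congrArg (fun H : AddSubgroup _ => Nat.card H) h
  simp only [Nat.card_zmultiples, addOrderOf_gen hp hpn hpn2 _ hd,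
    addOrderOf_gen hp hpn hpn2 _ hd'] at hord
  obtain ⟨rfl, hkind⟩ := eq_of_genOrder_eq hp hpn2 hd hd' hord
  obtain ⟨c, hc⟩ := mem_zmultiples_iff.mp (h ▸ mem_zmultiples (gen p n d j'))
  obtain ⟨c', hc'⟩ := mem_zmultiples_iff.mp (h.symm ▸ mem_zmultiples (gen p n d j))
  rw [Prod.mk.injEq, eq_self, true_and]
  by_cases hpd : p ∣ d
  · rcases hj.lt_or_eq with hj | rfl <;> rcases hj'.lt_or_eq with hj' | rfl
    · exact eq_of_zsmul_gen_eq_gen_of_dvd hp hd hpd hj hj' hc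
    · exact absurd hc' (zsmul_gen_self_ne hp hd hpd hj)
    · exact absurd hc (zsmul_gen_self_ne hp hd hpd hj')
    · rfl
  · simp only [hpd, false_or] at hkind
    rcases hj.lt_or_eq with hj | rfl
    · exact eq_of_zsmul_gen_eq_gen_of_not_dvd hp hpn hd hpd hj
        (hj'.lt_of_ne fun h => hj.ne (hkind.mpr h)) hc
    · exact (hkind.mp rfl).symm

end Generators

theorem sum_totient_genOrder_sub_one (p n : ℕ) :
    ∑ dj ∈ n.divisors ×ˢ range (p + 1), (Nat.totient (genOrder p dj.1 dj.2) - 1) =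
      ∑ d ∈ n.divisors.filter (fun d => ¬ p ∣ d), (Nat.totient d - 1) +
      (p + 1) * ∑ d ∈ n.divisors.filter (fun d => p ∣ d), (Nat.totient d - 1) +
      p * ∑ d ∈ n.divisors.filter (fun d => ¬ p ∣ d), (Nat.totient (d * p ^ 2) - 1) := by
  rw [sum_product, ← sum_filter_add_sum_filter_not n.divisors (p ∣ ·), mul_sum, mul_sum,
    add_right_comm, ← sum_add_distrib, add_comm]
  congr 1
  · refine sum_congr rfl fun d hd => ?_
    have hpd := (mem_filter.mp hd).2
    rw [sum_range_succ, add_comm, sum_congr rfl fun j hj => by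
      rw [genOrder, if_neg (by simp [hpd, (mem_range.mp hj).ne])]]
    simp [genOrder]
  · refine sum_congr rfl fun d hd => ?_
    simp [genOrder, (mem_filter.mp hd).2]

/-- For a prime `p` with `p ∣ n` and `p² ∤ n`, `(X + 1) ^ α` divides the characteristic
polynomial of the adjacency matrix of the power graph of `Z_{p²} × Z_n`, where
`α = Σ_{d ∣ n, p ∤ d} (φ(d)-1) + (p+1) Σ_{d ∣ n, p ∣ d} (φ(d)-1)
  + p Σ_{d ∣ n, p ∤ d} (φ(d·p²)-1)`. -/
theorem charpoly_power_graph_Zp2_Zn_p_not_sq (p n : ℕ) (hp : p.Prime) [NeZero n]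
    (h1 : p ∣ n) (h2 : ¬ p ^ 2 ∣ n) :
    letI : NeZero (p ^ 2) := ⟨pow_ne_zero 2 hp.ne_zero⟩
    ((X : Polynomial ℤ) + 1) ^
        (∑ d ∈ n.divisors.filter (fun d => ¬ p ∣ d), (Nat.totient d - 1) +
         (p + 1) * ∑ d ∈ n.divisors.filter (fun d => p ∣ d), (Nat.totient d - 1) +
         p * ∑ d ∈ n.divisors.filter (fun d => ¬ p ∣ d), (Nat.totient (d * p ^ 2) - 1)) ∣
      Matrix.charpoly (adjMat (addPowerGraph (ZMod (p ^ 2) × ZMod n))) := by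
  have : NeZero (p ^ 2) := ⟨pow_ne_zero 2 hp.ne_zero⟩
  classical
  refine (pow_dvd_pow _ ?_).trans (pow_dvd_charpoly_adjMat_addPowerGraph_s15 _)
  rw [← sum_totient_genOrder_sub_one]
  calc ∑ dj ∈ n.divisors ×ˢ range (p + 1), (Nat.totient (genOrder p dj.1 dj.2) - 1)
      ≤ ∑ dj ∈ n.divisors ×ˢ range (p + 1),
          (#{y | zmultiples y = zmultiples (gen p n dj.1 dj.2)} - 1) := by
        refine sum_le_sum fun dj hdj => Nat.sub_le_sub_right ?_ 1
        rw [← addOrderOf_gen hp h1 h2 _ (Nat.dvd_of_mem_divisors (mem_product.mp hdj).1)]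
        exact totient_addOrderOf_le_card_zmultiples_eq _
    _ ≤ _ := sum_card_fiber_sub_one_le (V := ZMod (p ^ 2) × ZMod n) zmultiples _ _
        (injOn_zmultiples_gen hp h1 h2)
end
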